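/- arXiv:1708.09077 — 2 statements merged into one kernel-verified Lean document; each statement's English description precedes it below -/
import Mathlib

section
/- The number of circular parking sequences for car sizes (y_1, ..., y_n) on M = y_1 + ··· + y_n + 1 circular spots equals M · ∏_{i=1}^{n-1} (y_1 + ··· + y_i + n + 1 - i). -/
/-- One step of the linear parking process on spots `1, …, M`:
car of size `y` with preference `c` drives to the first empty spot `j ≥ c`,
and parks in spots `j, …, j+y-1` if they are all empty and within the lot. -/
def parkStep (M : ℕ) (occ : Finset ℕ) (c y : ℕ) : Option (Finset ℕ) :=
  match (List.range' c (M + 1 - c)).find? (fun j => decide (j ∉ occ)) with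
  | none => none
  | some j =>
      if j + y - 1 ≤ M ∧ ∀ k ∈ Finset.Ico j (j + y), k ∉ occ then
        some (occ ∪ Finset.Ico j (j + y))
      else none

/-- Run the linear parking process for a list of (preference, size) pairs. -/
def parkRun (M : ℕ) (l : List (ℕ × ℕ)) : Option (Finset ℕ) :=
  l.foldlM (fun occ p => parkStep M occ p.1 p.2) ∅

/-- `c` is a parking sequence for car sizes `y` on `y.sum` linear spots. -/
def IsParkingSeq (y c : List ℕ) : Prop :=
  c.length = y.length ∧ (∀ x ∈ c, 1 ≤ x) ∧ (parkRun y.sum (c.zip y)).isSome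

/-- One step of the circular parking process on `M` spots (labeled by `ZMod M`):
car of size `y` with preference `c` moves cyclically forward to the first
empty spot `j` and parks in spots `j, j+1, …, j+y-1` if they are all empty. -/
def cparkStep (M : ℕ) (occ : Finset (ZMod M)) (c : ZMod M) (y : ℕ) :
    Option (Finset (ZMod M)) :=
  match (List.range M).find? (fun k => decide (c + (k : ZMod M) ∉ occ)) with
  | none => none
  | some k =>
      let spots : Finset (ZMod M) :=
        (Finset.range y).image (fun t : ℕ => c + (k : ZMod M) + (t : ZMod M))
      if ∀ s ∈ spots, s ∉ occ then some (occ ∪ spots) else none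

/-- Run the circular parking process for a list of (preference, size) pairs. -/
def cparkRun (M : ℕ) (l : List (ZMod M × ℕ)) : Option (Finset (ZMod M)) :=
  l.foldlM (fun occ p => cparkStep M occ p.1 p.2) ∅

/-- `c` is a circular parking sequence for car sizes `y` on `y.sum + 1` circular spots. -/
def IsCircParkingSeq (y : List ℕ) (c : List (ZMod (y.sum + 1))) : Prop :=
  c.length = y.length ∧ (cparkRun (y.sum + 1) (c.zip y)).isSome

/-!
Induct on the last car, on a circle of `m + a` spots where the other cars have total size less
than `m`. If the last car has size `a + 1` and comes to rest on the spots `p, …, p + a`, deleting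
the spots `p, …, p + a - 1` (undoing `gapEmbed p`) turns the parking of the other cars into a
parking on `m` spots that leaves `0`, the image of `p + a`, empty, and turns the last preference
`p - k` into an offset `k` for which `-k, …, -1` are occupied. This is a bijection for each of the
`m + a` choices of `p`, and rotating by `k` matches these marked sequences with all parking
sequences on `m` spots, since `k` is then the offset of the first empty spot from `0`. Hence each
car contributes the size of the circle left once all later cars have been contracted.
-/

theorem ZMod.natCast_injOn_Iio {m : ℕ} : Set.InjOn (Nat.cast : ℕ → ZMod m) (Set.Iio m) :=
  fun s hs t ht h => by
    simpa [ZMod.val_cast_of_lt hs, ZMod.val_cast_of_lt ht] using congrArg ZMod.val h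

theorem ZMod.val_add_natCast_of_lt {m : ℕ} {j : ZMod m} {t : ℕ} (h : j.val + t < m) :
    (j + t).val = j.val + t := by
  have ht : t < m := by omega
  rw [ZMod.val_add_of_lt (by rwa [ZMod.val_cast_of_lt ht]), ZMod.val_cast_of_lt ht]

theorem ZMod.add_natCast_sub_val {m : ℕ} [NeZero m] (c : ZMod m) :
    c + ((m - c.val : ℕ) : ZMod m) = 0 := by
  rw [Nat.cast_sub (ZMod.val_lt c).le, ZMod.natCast_self, ZMod.natCast_val, ZMod.cast_id', id_eq]
  ring

namespace CircularParking

open Finset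

variable {m : ℕ}

def arc (x : ZMod m) (y : ℕ) : Finset (ZMod m) :=
  (range y).image fun t : ℕ => x + t

theorem mem_arc {x z : ZMod m} {y : ℕ} : z ∈ arc x y ↔ ∃ t < y, x + t = z := by
  simp [arc]

theorem add_natCast_mem_arc {x : ZMod m} {t y : ℕ} (h : t < y) : x + t ∈ arc x y :=
  mem_arc.2 ⟨t, h, rfl⟩

theorem card_arc {x : ZMod m} {y : ℕ} (hy : y ≤ m) : #(arc x y) = y := by
  rw [arc, card_image_of_injOn, card_range]
  intro s hs t ht h
  simp only [coe_range, Set.mem_Iio] at hs ht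
  exact ZMod.natCast_injOn_Iio (by simp; omega) (by simp; omega) (add_left_cancel h)

theorem image_add_arc (x r : ZMod m) (y : ℕ) : (arc x y).image (· + r) = arc (x + r) y := by
  simp only [arc, image_image]
  exact image_congr fun t _ => by simp only [Function.comp]; ring

def IsFirstEmpty (occ : Finset (ZMod m)) (x : ZMod m) (k : ℕ) : Prop :=
  k < m ∧ x + k ∉ occ ∧ ∀ j < k, x + j ∈ occ

theorem IsFirstEmpty.le_of_notMem {occ : Finset (ZMod m)} {x : ZMod m} {k d : ℕ}
    (h : IsFirstEmpty occ x k) (hd : x + d ∉ occ) : k ≤ d :=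
  not_lt.1 fun hlt => hd (h.2.2 d hlt)

theorem IsFirstEmpty.unique {occ : Finset (ZMod m)} {x : ZMod m} {k l : ℕ}
    (hk : IsFirstEmpty occ x k) (hl : IsFirstEmpty occ x l) : k = l :=
  le_antisymm (hk.le_of_notMem hl.2.1) (hl.le_of_notMem hk.2.1)

theorem IsFirstEmpty.le_card {occ : Finset (ZMod m)} {x : ZMod m} {k : ℕ}
    (h : IsFirstEmpty occ x k) : k ≤ #occ := by
  calc k = #(arc x k) := (card_arc h.1.le).symm
    _ ≤ #occ := card_le_card fun z hz => by
      obtain ⟨j, hj, rfl⟩ := mem_arc.1 hz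
      exact h.2.2 j hj

theorem exists_isFirstEmpty [NeZero m] {occ : Finset (ZMod m)} (x : ZMod m) {z : ZMod m}
    (hz : z ∉ occ) : ∃ k, IsFirstEmpty occ x k := by
  classical
  have hex : ∃ d : ℕ, x + d ∉ occ := ⟨(z - x).val, by simpa using hz⟩
  refine ⟨Nat.find hex, ?_, Nat.find_spec hex, fun j hj => not_not.1 (Nat.find_min hex hj)⟩
  exact (Nat.find_le (by simpa using hz)).trans_lt (ZMod.val_lt (z - x))

theorem isFirstEmpty_image_add_iff {occ : Finset (ZMod m)} {x : ZMod m} {k : ℕ} (r : ZMod m) :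
    IsFirstEmpty (occ.image (· + r)) (x + r) k ↔ IsFirstEmpty occ x k := by
  have hmem (z : ZMod m) : z + r ∈ occ.image (· + r) ↔ z ∈ occ :=
    (add_left_injective r).mem_finset_image
  simp only [IsFirstEmpty, add_right_comm x r, hmem]

theorem isFirstEmpty_iff_find?_eq_some {occ : Finset (ZMod m)} {x : ZMod m} {k : ℕ} :
    IsFirstEmpty occ x k ↔
      (List.range m).find? (fun j : ℕ => decide (x + (j : ZMod m) ∉ occ)) = some k := by
  rw [List.find?_range_eq_some, IsFirstEmpty]
  simp only [decide_eq_true_eq, Bool.not_eq_true', decide_eq_false_iff_not, not_not,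
    List.mem_range]
  tauto

/-- The search in `cparkStep` runs over `List.range m` coerced to a list in `ZMod m` (a monadic
lift); here it is made a search over natural offsets. -/
theorem cparkStep_eq_bind (occ : Finset (ZMod m)) (x : ZMod m) (y : ℕ) :
    cparkStep m occ x y =
      ((List.range m).find? fun j : ℕ => decide (x + (j : ZMod m) ∉ occ)).bind fun k =>
        if Disjoint (arc (x + k : ZMod m) y) occ then some (occ ∪ arc (x + k : ZMod m) y)
        else none := by
  have hlist : (do let a ← List.range m; pure (a : ZMod m)) = (List.range m).map Nat.cast :=
    List.map_eq_flatMap.symm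
  rw [cparkStep, hlist, List.find?_map, Function.comp_def]
  cases (List.range m).find? _ <;> simp [arc, disjoint_left]

theorem cparkStep_eq_of_isFirstEmpty {occ : Finset (ZMod m)} {x : ZMod m} {k y : ℕ}
    (h : IsFirstEmpty occ x k) :
    cparkStep m occ x y =
      if Disjoint (arc (x + k : ZMod m) y) occ then some (occ ∪ arc (x + k : ZMod m) y)
      else none := by
  rw [cparkStep_eq_bind, isFirstEmpty_iff_find?_eq_some.1 h, Option.bind_some]

theorem cparkStep_eq_some_iff {occ o : Finset (ZMod m)} {x : ZMod m} {y : ℕ} :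
    cparkStep m occ x y = some o ↔ ∃ k, IsFirstEmpty occ x k ∧
      Disjoint (arc (x + k : ZMod m) y) occ ∧ o = occ ∪ arc (x + k : ZMod m) y := by
  simp only [cparkStep_eq_bind, Option.bind_eq_some_iff, ← isFirstEmpty_iff_find?_eq_some]
  refine exists_congr fun k => and_congr_right fun _ => ?_
  split_ifs with h <;> simp [h, eq_comm]

theorem cparkStep_eq_none_of_forall_not_isFirstEmpty {occ : Finset (ZMod m)} {x : ZMod m}
    {y : ℕ} (h : ∀ k, ¬IsFirstEmpty occ x k) : cparkStep m occ x y = none :=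
  Option.eq_none_iff_forall_ne_some.2 fun _ ho =>
    let ⟨k, hk, _⟩ := cparkStep_eq_some_iff.1 ho
    h k hk

theorem cparkStep_image_add {occ : Finset (ZMod m)} {x : ZMod m} {y : ℕ} (r : ZMod m) :
    cparkStep m (occ.image (· + r)) (x + r) y = (cparkStep m occ x y).map (image (· + r)) := by
  by_cases hk : ∃ k, IsFirstEmpty occ x k
  · obtain ⟨k, hk⟩ := hk
    rw [cparkStep_eq_of_isFirstEmpty hk,
      cparkStep_eq_of_isFirstEmpty ((isFirstEmpty_image_add_iff r).2 hk), add_right_comm,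
      ← image_add_arc]
    simp only [disjoint_image (add_left_injective r), ← image_union]
    split_ifs <;> rfl
  · rw [cparkStep_eq_none_of_forall_not_isFirstEmpty (not_exists.1 hk),
      cparkStep_eq_none_of_forall_not_isFirstEmpty fun k hk' =>
        hk ⟨k, (isFirstEmpty_image_add_iff r).1 hk'⟩, Option.map_none]

def cparkRunFrom (m : ℕ) (occ : Finset (ZMod m)) (l : List (ZMod m × ℕ)) :
    Option (Finset (ZMod m)) :=
  l.foldlM (fun occ p => cparkStep m occ p.1 p.2) occ

@[simp]
theorem cparkRunFrom_nil (occ : Finset (ZMod m)) : cparkRunFrom m occ [] = some occ := rfl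

@[simp]
theorem cparkRunFrom_cons (occ : Finset (ZMod m)) (x : ZMod m) (y : ℕ) (l : List (ZMod m × ℕ)) :
    cparkRunFrom m occ ((x, y) :: l) = (cparkStep m occ x y).bind (cparkRunFrom m · l) := by
  simp [cparkRunFrom, List.foldlM_cons]

theorem cparkRunFrom_append (occ : Finset (ZMod m)) (l₁ l₂ : List (ZMod m × ℕ)) :
    cparkRunFrom m occ (l₁ ++ l₂) = (cparkRunFrom m occ l₁).bind (cparkRunFrom m · l₂) := by
  simp [cparkRunFrom, List.foldlM_append]

theorem subset_of_cparkRunFrom_eq_some {occ O : Finset (ZMod m)} {l : List (ZMod m × ℕ)}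
    (h : cparkRunFrom m occ l = some O) : occ ⊆ O := by
  induction l generalizing occ with
  | nil => simp_all
  | cons p l ih =>
    obtain ⟨o, ho, hrun⟩ := Option.bind_eq_some_iff.1 (cparkRunFrom_cons occ p.1 p.2 l ▸ h)
    obtain ⟨k, -, -, rfl⟩ := cparkStep_eq_some_iff.1 ho
    exact subset_union_left.trans (ih hrun)

theorem card_le_of_cparkRunFrom_eq_some {occ O : Finset (ZMod m)} {l : List (ZMod m × ℕ)}
    (h : cparkRunFrom m occ l = some O) : #O ≤ #occ + (l.map Prod.snd).sum := by
  induction l generalizing occ with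
  | nil => simp_all
  | cons p l ih =>
    obtain ⟨o, ho, hrun⟩ := Option.bind_eq_some_iff.1 (cparkRunFrom_cons occ p.1 p.2 l ▸ h)
    obtain ⟨k, -, -, rfl⟩ := cparkStep_eq_some_iff.1 ho
    have := card_union_le occ (arc (p.1 + k : ZMod m) p.2)
    have : #(arc (p.1 + k : ZMod m) p.2) ≤ p.2 := card_image_le.trans (card_range _).le
    grind

theorem cparkRunFrom_image_add {occ : Finset (ZMod m)} {l : List (ZMod m × ℕ)} (r : ZMod m) :
    cparkRunFrom m (occ.image (· + r)) (l.map (Prod.map (· + r) id)) =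
      (cparkRunFrom m occ l).map (image (· + r)) := by
  induction l generalizing occ with
  | nil => simp
  | cons p l ih =>
    obtain ⟨x, y⟩ := p
    simp only [List.map_cons, Prod.map_apply, id_eq, cparkRunFrom_cons, cparkStep_image_add]
    cases cparkStep m occ x y with
    | none => rfl
    | some o => exact ih

section Gap

variable {a : ℕ} (p : ZMod (m + a))

/-- Embeds the circle of `m` spots into the circle of `m + a` spots, leaving out the `a` spots
`p, …, p + a - 1`; spot `0` goes to `p + a`. -/
def gapEmbed (j : ZMod m) : ZMod (m + a) :=
  p + ((a + j.val : ℕ) : ZMod (m + a))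

theorem gapEmbed_zero : gapEmbed p (0 : ZMod m) = p + a := by
  simp [gapEmbed]

theorem gapEmbed_add_natCast {j : ZMod m} {t : ℕ} (h : j.val + t < m) :
    gapEmbed p j + t = gapEmbed p (j + t) := by
  rw [gapEmbed, gapEmbed, ZMod.val_add_natCast_of_lt h]
  push_cast
  ring

theorem image_gapEmbed_arc {c : ZMod m} {y : ℕ} (h : c.val + y ≤ m) :
    (arc c y).image (gapEmbed p) = arc (gapEmbed p c) y := by
  simp only [arc, image_image]
  exact image_congr fun t ht => (gapEmbed_add_natCast p (by simp at ht; omega)).symm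

variable [NeZero m]

theorem gapEmbed_injective : Function.Injective (gapEmbed p) := fun i j h => by
  have := ZMod.natCast_injOn_Iio (m := m + a) (by have := ZMod.val_lt i; simp; omega)
    (by have := ZMod.val_lt j; simp; omega) (add_left_cancel h)
  exact ZMod.val_injective m (by omega)

theorem gapEmbed_add_natCast_sub_val (j : ZMod m) : gapEmbed p j + ((m - j.val : ℕ)) = p := by
  have hj := (ZMod.val_lt j).le
  rw [gapEmbed, add_assoc, ← Nat.cast_add, show a + j.val + (m - j.val) = m + a by omega,
    ZMod.natCast_self, add_zero]

theorem gapEmbed_neg_add {j k : ℕ} (hjk : j < k) (hk : k < m) :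
    gapEmbed p (-(k : ZMod m) + j) = p - k + j := by
  have hval : (-(k : ZMod m) + j).val = m - (k - j) := by
    rw [show -(k : ZMod m) + j = -((k - j : ℕ) : ZMod m) by push_cast [hjk.le]; ring,
      ZMod.neg_val, if_neg, ZMod.val_cast_of_lt (by omega)]
    rw [ZMod.natCast_eq_zero_iff]
    exact Nat.not_dvd_of_pos_of_lt (by omega) (by omega)
  have := gapEmbed_add_natCast_sub_val p (-(k : ZMod m) + j)
  rw [hval, show m - (m - (k - j)) = k - j by omega] at this
  rw [eq_sub_of_add_eq this]
  push_cast [hjk.le]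
  ring

theorem add_natCast_notMem_image_gapEmbed {occ : Finset (ZMod m)} (h0 : 0 ∉ occ) {t : ℕ}
    (ht : t ≤ a) : p + t ∉ occ.image (gapEmbed p) := by
  rintro hmem
  obtain ⟨j, hj, he⟩ := mem_image.1 hmem
  have := ZMod.natCast_injOn_Iio (m := m + a) (by have := ZMod.val_lt j; simp; omega)
    (by have := NeZero.pos m; simp; omega) (add_left_cancel he)
  rw [show j = 0 from ZMod.val_injective m (by rw [ZMod.val_zero]; omega)] at hj
  exact h0 hj

theorem exists_gapEmbed_eq_or (x : ZMod (m + a)) :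
    (∃ j, gapEmbed p j = x) ∨ ∃ t < a, p + t = x := by
  have hx : p + (x - p).val = x := by simp
  by_cases hs : a ≤ (x - p).val
  · have hlt : (x - p).val - a < m := by have := ZMod.val_lt (x - p); omega
    refine .inl ⟨((x - p).val - a : ℕ), ?_⟩
    rw [gapEmbed, ZMod.val_cast_of_lt hlt, Nat.add_sub_cancel' hs, hx]
  · exact .inr ⟨(x - p).val, by omega, hx⟩

theorem isFirstEmpty_image_gapEmbed_iff {occ : Finset (ZMod m)} {c : ZMod m} {k : ℕ}
    (h : c.val + k < m) :
    IsFirstEmpty (occ.image (gapEmbed p)) (gapEmbed p c) k ↔ IsFirstEmpty occ c k := by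
  have hmem (j : ℕ) (hj : j ≤ k) :
      gapEmbed p c + j ∈ occ.image (gapEmbed p) ↔ c + j ∈ occ := by
    rw [gapEmbed_add_natCast p (by omega), (gapEmbed_injective p).mem_finset_image]
  exact ⟨fun ⟨_, hk, hlt⟩ => ⟨by omega, mt (hmem k le_rfl).2 hk, fun j hj =>
      (hmem j hj.le).1 (hlt j hj)⟩,
    fun ⟨_, hk, hlt⟩ => ⟨by omega, mt (hmem k le_rfl).1 hk, fun j hj =>
      (hmem j hj.le).2 (hlt j hj)⟩⟩

theorem isFirstEmpty_image_gapEmbed_sub_iff {occ : Finset (ZMod m)} (h0 : 0 ∉ occ) {k : ℕ}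
    (hk : k < m) :
    IsFirstEmpty (occ.image (gapEmbed p)) (p - k) k ↔ IsFirstEmpty occ (-(k : ZMod m)) k := by
  have hp : p ∉ occ.image (gapEmbed p) := by
    simpa using add_natCast_notMem_image_gapEmbed p h0 (Nat.zero_le a)
  have hmem (j : ℕ) (hj : j < k) :
      p - k + j ∈ occ.image (gapEmbed p) ↔ -(k : ZMod m) + j ∈ occ := by
    rw [← gapEmbed_neg_add p hj hk, (gapEmbed_injective p).mem_finset_image]
  simp only [IsFirstEmpty, sub_add_cancel, neg_add_cancel]
  exact ⟨fun ⟨_, _, h⟩ => ⟨hk, h0, fun j hj => (hmem j hj).1 (h j hj)⟩,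
    fun ⟨_, _, h⟩ => ⟨by omega, hp, fun j hj => (hmem j hj).2 (h j hj)⟩⟩

theorem cparkStep_image_gapEmbed {occ : Finset (ZMod m)} {c : ZMod m} {k y : ℕ}
    (hk : IsFirstEmpty occ c k) (hy : 0 < y) (h : c.val + k + y ≤ m) :
    cparkStep (m + a) (occ.image (gapEmbed p)) (gapEmbed p c) y =
      (cparkStep m occ c y).map (image (gapEmbed p)) := by
  rw [cparkStep_eq_of_isFirstEmpty hk,
    cparkStep_eq_of_isFirstEmpty ((isFirstEmpty_image_gapEmbed_iff p (by omega)).2 hk),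
    gapEmbed_add_natCast p (by omega),
    ← image_gapEmbed_arc p (by rw [ZMod.val_add_natCast_of_lt (by omega)]; omega)]
  simp only [disjoint_image (gapEmbed_injective p), ← image_union]
  split_ifs <;> rfl

theorem cparkStep_image_gapEmbed_eq_some {occ o : Finset (ZMod m)} {c : ZMod m} {y : ℕ}
    (hy : 0 < y) (h0 : 0 ∉ o) (h : cparkStep m occ c y = some o) :
    cparkStep (m + a) (occ.image (gapEmbed p)) (gapEmbed p c) y = some (o.image (gapEmbed p)) := by
  obtain ⟨k, hk, -, rfl⟩ := cparkStep_eq_some_iff.1 h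
  have hk_le : k ≤ m - c.val :=
    hk.le_of_notMem fun h => h0 (ZMod.add_natCast_sub_val c ▸ mem_union_left _ h)
  have hfit : c.val + k + y ≤ m := by
    by_contra hlt
    refine h0 (mem_union_right _ (mem_arc.2 ⟨m - c.val - k, by omega, ?_⟩))
    rw [add_assoc, ← Nat.cast_add, Nat.add_sub_cancel' hk_le, ZMod.add_natCast_sub_val]
  rw [cparkStep_image_gapEmbed p hk hy hfit, h, Option.map_some]

theorem exists_cparkStep_eq_some_of_image_gapEmbed {occ : Finset (ZMod m)}
    {o : Finset (ZMod (m + a))} {x : ZMod (m + a)} {y : ℕ} (hy : 0 < y) (h0 : 0 ∉ occ)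
    (hgap : ∀ t ≤ a, p + t ∉ o) (h : cparkStep (m + a) (occ.image (gapEmbed p)) x y = some o) :
    ∃ c o', gapEmbed p c = x ∧ cparkStep m occ c y = some o' ∧ 0 ∉ o' ∧
      o = o'.image (gapEmbed p) := by
  obtain ⟨k, hk, -, rfl⟩ := cparkStep_eq_some_iff.1 h
  obtain ⟨c, rfl⟩ : ∃ c, gapEmbed p c = x := by
    refine (exists_gapEmbed_eq_or p x).resolve_right ?_
    rintro ⟨t, ht, rfl⟩
    have hk0 : k = 0 := by
      by_contra hk0
      exact add_natCast_notMem_image_gapEmbed p h0 ht.le (by simpa using hk.2.2 0 (by omega))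
    subst hk0
    exact hgap t ht.le
      (mem_union_right _ (by simpa using add_natCast_mem_arc (x := p + (t : ZMod (m + a))) hy))
  have hk_le : k ≤ m - c.val := hk.le_of_notMem <| by
    simpa [gapEmbed_add_natCast_sub_val] using
      add_natCast_notMem_image_gapEmbed p h0 (Nat.zero_le a)
  have hfit : c.val + k + y ≤ m := by
    by_contra hlt
    refine hgap 0 (Nat.zero_le a) (mem_union_right _ (mem_arc.2 ⟨m - c.val - k, by omega, ?_⟩))
    rw [add_assoc, ← Nat.cast_add, Nat.add_sub_cancel' hk_le, gapEmbed_add_natCast_sub_val,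
      Nat.cast_zero, add_zero]
  have hstep := cparkStep_image_gapEmbed p ((isFirstEmpty_image_gapEmbed_iff p (by omega)).1 hk)
    hy hfit
  rw [h, eq_comm, Option.map_eq_some_iff] at hstep
  obtain ⟨o', ho', ho⟩ := hstep
  refine ⟨c, o', rfl, ho', fun h0' => hgap a le_rfl ?_, ho.symm⟩
  rw [← gapEmbed_zero, ← ho]
  exact mem_image_of_mem _ h0'

theorem cparkRunFrom_image_gapEmbed_eq_some {occ O : Finset (ZMod m)} {l : List (ZMod m × ℕ)}
    (hl : ∀ q ∈ l, 0 < q.2) (h0 : 0 ∉ O) (h : cparkRunFrom m occ l = some O) :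
    cparkRunFrom (m + a) (occ.image (gapEmbed p)) (l.map (Prod.map (gapEmbed p) id)) =
      some (O.image (gapEmbed p)) := by
  induction l generalizing occ with
  | nil => simp_all
  | cons q l ih =>
    obtain ⟨x, y⟩ := q
    obtain ⟨o, ho, hrun⟩ := Option.bind_eq_some_iff.1 (cparkRunFrom_cons occ x y l ▸ h)
    have h0o : 0 ∉ o := fun h' => h0 (subset_of_cparkRunFrom_eq_some hrun h')
    simp only [List.map_cons, Prod.map_apply, id_eq, cparkRunFrom_cons,
      cparkStep_image_gapEmbed_eq_some p (hl _ List.mem_cons_self) h0o ho, Option.bind_some]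
    exact ih (fun q hq => hl q (List.mem_cons_of_mem _ hq)) hrun

theorem cparkRunFrom_zip_map_gapEmbed {d : List (ZMod m)} {ys : List ℕ} {O : Finset (ZMod m)}
    (hys : ∀ y ∈ ys, 0 < y) (h0 : 0 ∉ O) (h : cparkRunFrom m ∅ (d.zip ys) = some O) :
    cparkRunFrom (m + a) ∅ ((d.map (gapEmbed p)).zip ys) = some (O.image (gapEmbed p)) := by
  simpa [List.zip_map_left] using cparkRunFrom_image_gapEmbed_eq_some p
    (fun q hq => hys q.2 (List.of_mem_zip hq).2) h0 h

theorem exists_cparkRunFrom_zip_eq_some_of_image_gapEmbed {occ : Finset (ZMod m)}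
    {O : Finset (ZMod (m + a))} {d : List (ZMod (m + a))} {ys : List ℕ}
    (hlen : d.length = ys.length) (hys : ∀ y ∈ ys, 0 < y) (h0 : 0 ∉ occ)
    (hgap : ∀ t ≤ a, p + t ∉ O)
    (h : cparkRunFrom (m + a) (occ.image (gapEmbed p)) (d.zip ys) = some O) :
    ∃ (d' : List (ZMod m)) (O' : Finset (ZMod m)), d'.map (gapEmbed p) = d ∧
      cparkRunFrom m occ (d'.zip ys) = some O' ∧ 0 ∉ O' ∧ O = O'.image (gapEmbed p) := by
  induction d generalizing ys occ with
  | nil => exact ⟨[], occ, rfl, rfl, h0, by simpa using h.symm⟩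
  | cons x d ih =>
    obtain _ | ⟨y, ys⟩ := ys
    · simp at hlen
    simp only [List.zip_cons_cons, cparkRunFrom_cons, Option.bind_eq_some_iff] at h
    obtain ⟨o, ho, hrun⟩ := h
    obtain ⟨c, o', rfl, ho', h0', rfl⟩ := exists_cparkStep_eq_some_of_image_gapEmbed p
      (hys y List.mem_cons_self) h0
      (fun t ht hmem => hgap t ht (subset_of_cparkRunFrom_eq_some hrun hmem)) ho
    obtain ⟨d', O', rfl, hrun', h0O, rfl⟩ := ih (by simpa using hlen)
      (fun y hy => hys y (List.mem_cons_of_mem _ hy)) h0' hrun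
    exact ⟨c :: d', O', rfl, by simp [ho', hrun'], h0O, rfl⟩

end Gap

def parkingSeqs (m : ℕ) (ys : List ℕ) : Set (List (ZMod m)) :=
  {d | d.length = ys.length ∧ (cparkRunFrom m ∅ (d.zip ys)).isSome}

/-- `k` is where a removed last car came from: `k` spots before the free spot `0`. -/
def markedParkingSeqs (m : ℕ) (ys : List ℕ) : Set (List (ZMod m) × ℕ) :=
  {x | x.1.length = ys.length ∧
    ∃ O, cparkRunFrom m ∅ (x.1.zip ys) = some O ∧ IsFirstEmpty O (-(x.2 : ZMod m)) x.2}

/-- The last car of size `a + 1` is put back on the spots `p, …, p + a`, coming from `p - k`. -/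
def liftParkingSeq {a : ℕ} (q : ZMod (m + a) × (List (ZMod m) × ℕ)) : List (ZMod (m + a)) :=
  q.2.1.map (gapEmbed q.1) ++ [q.1 - q.2.2]

theorem card_le_sum_of_cparkRunFrom_zip {d : List (ZMod m)} {ys : List ℕ} {O : Finset (ZMod m)}
    (hlen : d.length = ys.length) (h : cparkRunFrom m ∅ (d.zip ys) = some O) : #O ≤ ys.sum := by
  simpa [List.map_snd_zip hlen.ge] using card_le_of_cparkRunFrom_eq_some h

theorem cparkRunFrom_zip_map_add {d : List (ZMod m)} {ys : List ℕ} {O : Finset (ZMod m)}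
    (r : ZMod m) (h : cparkRunFrom m ∅ (d.zip ys) = some O) :
    cparkRunFrom m ∅ ((d.map (· + r)).zip ys) = some (O.image (· + r)) := by
  simpa [List.zip_map_left, h] using cparkRunFrom_image_add (occ := ∅) (l := d.zip ys) r

theorem bijOn_markedParkingSeqs [NeZero m] {ys : List ℕ} (hsum : ys.sum < m) :
    Set.BijOn (fun x : List (ZMod m) × ℕ => x.1.map (· + (x.2 : ZMod m)))
      (markedParkingSeqs m ys) (parkingSeqs m ys) := by
  refine ⟨?_, ?_, ?_⟩
  · rintro ⟨d, k⟩ ⟨hlen, O, hO, -⟩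
    exact ⟨by simpa using hlen, by simp [cparkRunFrom_zip_map_add _ hO]⟩
  · rintro ⟨d₁, k₁⟩ ⟨-, O₁, hO₁, hk₁⟩ ⟨d₂, k₂⟩ ⟨-, O₂, hO₂, hk₂⟩ heq
    simp only at heq
    have hO := (cparkRunFrom_zip_map_add _ hO₁).symm.trans (heq ▸ cparkRunFrom_zip_map_add _ hO₂)
    have hk : k₁ = k₂ := by
      replace hk₁ := (isFirstEmpty_image_add_iff (k₁ : ZMod m)).2 hk₁
      replace hk₂ := (isFirstEmpty_image_add_iff (k₂ : ZMod m)).2 hk₂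
      rw [neg_add_cancel, Option.some_inj.1 hO] at hk₁
      rw [neg_add_cancel] at hk₂
      exact hk₁.unique hk₂
    subst hk
    rw [(List.map_injective_iff.2 (add_left_injective (k₁ : ZMod m))) heq]
  · rintro d ⟨hlen, hsome⟩
    obtain ⟨O, hO⟩ := Option.isSome_iff_exists.1 hsome
    obtain ⟨z, -, hz⟩ := exists_mem_notMem_of_card_lt_card (s := O) (t := univ) <| by
      rw [card_univ, ZMod.card]
      exact (card_le_sum_of_cparkRunFrom_zip hlen hO).trans_lt hsum
    obtain ⟨k, hk⟩ := exists_isFirstEmpty 0 hz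
    refine ⟨(d.map (· + -(k : ZMod m)), k), ⟨by simpa using hlen, _,
      cparkRunFrom_zip_map_add _ hO, ?_⟩, ?_⟩
    · simpa using (isFirstEmpty_image_add_iff (-(k : ZMod m))).2 hk
    · simp [Function.comp_def]

section Lift

variable [NeZero m] {a : ℕ} {ys : List ℕ}

theorem mapsTo_liftParkingSeq (hys : ∀ y ∈ ys, 0 < y) :
    Set.MapsTo (liftParkingSeq (a := a)) (Set.univ ×ˢ markedParkingSeqs m ys)
      (parkingSeqs (m + a) (ys ++ [a + 1])) := by
  rintro ⟨p, d, k⟩ ⟨-, hlen, O, hO, hk⟩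
  have h0 : 0 ∉ O := by simpa using hk.2.1
  have hstep : cparkStep (m + a) (O.image (gapEmbed p)) (p - k) (a + 1) =
      some (O.image (gapEmbed p) ∪ arc p (a + 1)) := by
    rw [cparkStep_eq_of_isFirstEmpty ((isFirstEmpty_image_gapEmbed_sub_iff p h0 hk.1).2 hk),
      sub_add_cancel, if_pos (disjoint_left.2 fun z hz => ?_)]
    obtain ⟨t, ht, rfl⟩ := mem_arc.1 hz
    exact add_natCast_notMem_image_gapEmbed p h0 (by omega)
  refine ⟨by simpa [liftParkingSeq] using hlen, ?_⟩
  rw [liftParkingSeq, List.zip_append (by simpa using hlen), cparkRunFrom_append,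
    cparkRunFrom_zip_map_gapEmbed p hys h0 hO, Option.bind_some]
  simp [hstep]

theorem injOn_liftParkingSeq (hys : ∀ y ∈ ys, 0 < y) :
    Set.InjOn (liftParkingSeq (a := a)) (Set.univ ×ˢ markedParkingSeqs m ys) := by
  rintro ⟨p₁, d₁, k₁⟩ ⟨-, hlen₁, O₁, hO₁, hk₁⟩ ⟨p₂, d₂, k₂⟩ ⟨-, hlen₂, O₂, hO₂, hk₂⟩ heq
  obtain ⟨hd, hp⟩ := List.append_inj heq (by simp [hlen₁, hlen₂])
  simp only [List.cons.injEq, and_true] at hp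
  have h0₁ : 0 ∉ O₁ := by simpa using hk₁.2.1
  have h0₂ : 0 ∉ O₂ := by simpa using hk₂.2.1
  have hO := (cparkRunFrom_zip_map_gapEmbed p₁ hys h0₁ hO₁).symm.trans
    (hd ▸ cparkRunFrom_zip_map_gapEmbed p₂ hys h0₂ hO₂)
  have hk₁' := (isFirstEmpty_image_gapEmbed_sub_iff p₁ h0₁ hk₁.1).2 hk₁
  have hk₂' := (isFirstEmpty_image_gapEmbed_sub_iff p₂ h0₂ hk₂.1).2 hk₂
  rw [Option.some_inj.1 hO, hp] at hk₁'
  obtain rfl : k₁ = k₂ := hk₁'.unique hk₂'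
  obtain rfl : p₁ = p₂ := by simpa using hp
  obtain rfl : d₁ = d₂ := List.map_injective_iff.2 (gapEmbed_injective p₁) hd
  rfl

theorem surjOn_liftParkingSeq (hys : ∀ y ∈ ys, 0 < y) (hsum : ys.sum < m) :
    Set.SurjOn (liftParkingSeq (a := a)) (Set.univ ×ˢ markedParkingSeqs m ys)
      (parkingSeqs (m + a) (ys ++ [a + 1])) := by
  rintro c ⟨hlen, hsome⟩
  obtain ⟨d, x, rfl⟩ : ∃ d x, c = d ++ [x] := by
    rcases List.eq_nil_or_concat c with rfl | ⟨d, x, rfl⟩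
    · simp at hlen
    · exact ⟨d, x, List.concat_eq_append⟩
  have hlen' : d.length = ys.length := by simpa using hlen
  rw [List.zip_append hlen', cparkRunFrom_append, Option.isSome_iff_exists] at hsome
  obtain ⟨F, hF⟩ := hsome
  obtain ⟨B, hB, hstep⟩ := Option.bind_eq_some_iff.1 hF
  simp only [List.zip_cons_cons, List.zip_nil_left, cparkRunFrom_cons, Option.bind_eq_some_iff]
    at hstep
  obtain ⟨_, hstep, -⟩ := hstep
  obtain ⟨k, hk, hdisj, -⟩ := cparkStep_eq_some_iff.1 hstep
  set p : ZMod (m + a) := x + k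
  have hgap (t : ℕ) (ht : t ≤ a) : p + t ∉ B :=
    disjoint_left.1 hdisj (add_natCast_mem_arc (by omega))
  rw [← image_empty (gapEmbed p)] at hB
  obtain ⟨d', O', rfl, hO', h0, rfl⟩ :=
    exists_cparkRunFrom_zip_eq_some_of_image_gapEmbed p hlen' hys (by simp) hgap hB
  have hkm : k < m := calc
    k ≤ #(O'.image (gapEmbed p)) := hk.le_card
    _ ≤ #O' := card_image_le
    _ < m := (card_le_sum_of_cparkRunFrom_zip (by simpa using hlen') hO').trans_lt hsum
  refine ⟨(p, d', k), ⟨Set.mem_univ _, by simpa using hlen', O', hO', ?_⟩, by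
    simp [liftParkingSeq, p]⟩
  exact (isFirstEmpty_image_gapEmbed_sub_iff p h0 hkm).1 (by simpa [p] using hk)

theorem card_parkingSeqs_append_singleton (hys : ∀ y ∈ ys, 0 < y) (hsum : ys.sum < m) :
    Nat.card (parkingSeqs (m + a) (ys ++ [a + 1])) = (m + a) * Nat.card (parkingSeqs m ys) := by
  have hlift : Set.BijOn liftParkingSeq (Set.univ ×ˢ markedParkingSeqs m ys)
      (parkingSeqs (m + a) (ys ++ [a + 1])) :=
    ⟨mapsTo_liftParkingSeq hys, injOn_liftParkingSeq hys, surjOn_liftParkingSeq hys hsum⟩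
  rw [← Nat.card_congr (hlift.equiv _), ← Nat.card_congr ((bijOn_markedParkingSeqs hsum).equiv _),
    Nat.card_congr (Equiv.Set.prod _ _), Nat.card_prod, Nat.card_univ, Nat.card_zmod]

end Lift

theorem card_parkingSeqs (ys : List ℕ) (hys : ∀ y ∈ ys, 0 < y) (hsum : ys.sum < m) :
    Nat.card (parkingSeqs m ys) = ∏ i ∈ range ys.length,
      ((ys.take (i + 1)).sum + ys.length - i + (m - (ys.sum + 1))) := by
  induction ys using List.reverseRecOn generalizing m with
  | nil =>
    have : parkingSeqs m [] = {[]} := by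
      ext d
      simp [parkingSeqs]
    simp [this]
  | append_singleton ys w ih =>
    obtain ⟨a, rfl⟩ : ∃ a, w = a + 1 := ⟨w - 1, by have := hys w (by simp); omega⟩
    simp only [List.sum_append, List.sum_singleton] at hsum
    obtain ⟨m, rfl⟩ : ∃ m', m = m' + a := ⟨m - a, by omega⟩
    have : NeZero m := ⟨by omega⟩
    rw [card_parkingSeqs_append_singleton (fun y hy => hys y (by simp [hy])) (by omega),
      ih (fun y hy => hys y (by simp [hy])) (by omega), List.length_append, List.length_singleton,
      prod_range_succ, mul_comm]
    congr 1
    · refine prod_congr rfl fun i hi => ?_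
      have hi := mem_range.1 hi
      rw [List.take_append_of_le_length (by omega)]
      simp only [List.sum_append, List.sum_singleton]
      omega
    · rw [List.take_of_length_le (by simp)]
      simp only [List.sum_append, List.sum_singleton]
      omega

end CircularParking

/-- The number of circular parking sequences for car sizes `y` on
`M = y.sum + 1` circular spots is `M · ∏_{i=1}^{n-1} (y₁ + ⋯ + yᵢ + n + 1 - i)`. -/
theorem circular_parking_count (y : List ℕ) (hy : ∀ x ∈ y, 0 < x) :
    Nat.card {c : List (ZMod (y.sum + 1)) // IsCircParkingSeq y c} =
      (y.sum + 1) *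
        ∏ i ∈ Finset.range (y.length - 1), ((y.take (i + 1)).sum + y.length - i) := by
  have hcount := CircularParking.card_parkingSeqs y hy (Nat.lt_add_one y.sum)
  simp only [Nat.sub_self, add_zero] at hcount
  change Nat.card (CircularParking.parkingSeqs (y.sum + 1) y) = _
  rw [hcount]
  rcases hn : y.length with _ | n
  · simp [List.length_eq_zero_iff.1 hn]
  · rw [Finset.prod_range_succ, mul_comm, Nat.add_sub_cancel, List.take_of_length_le hn.le]
    congr 1
    omega
end

section
/- A sequence (c_1, ..., c_n) with c_i ∈ {1, ..., M-1} is a parking sequence for (y_1, ..., y_n) on a linear lot of y_1 + ··· + y_n spots if and only if it is a circular parking sequence on M = y_1 + ··· + y_n + 1 circular spots in which spot M remains empty. -/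
/-!
Identify the linear spot `i ∈ {1, …, N}` with the residue `i` in `ZMod (N + 1)`, so that the
extra circular spot is `0 = N + 1`. Starting from a linear configuration `S ⊆ {1, …, N}`, a car
with preference `c` reaches the same first empty spot `j` in both processes, provided the linear
search counts `N + 1` as empty. Either the block `[j, j + y)` lies in `{1, …, N}`, and both
processes park the car there or both fail, or it covers `N + 1`: then the linear process fails
while the circular one fails or fills spot `0`, which stays occupied from then on. So each linear
step is the circular step restricted to outcomes leaving `0` empty, and so is every run.
-/

open Finset

lemma Finset.exists_first_notMem_ge (S : Finset ℕ) (c : ℕ) :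
    ∃ j, c ≤ j ∧ j ∉ S ∧ ∀ i, c ≤ i → i < j → i ∈ S := by
  classical
  have h : ∃ j, c ≤ j ∧ j ∉ S := by
    obtain ⟨j, hj⟩ := Infinite.exists_notMem_finset (S ∪ range c)
    simp only [mem_union, mem_range, not_or, not_lt] at hj
    exact ⟨j, hj.2, hj.1⟩
  refine ⟨Nat.find h, (Nat.find_spec h).1, (Nat.find_spec h).2, fun i hci hi => ?_⟩
  by_contra hiS
  exact Nat.find_min h hi ⟨hci, hiS⟩

section

variable {N : ℕ} {S : Finset ℕ}

lemma natCast_mem_image_natCast_iff (hS : S ⊆ Icc 1 N) {a : ℕ} (ha : a ≤ N + 1) :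
    (a : ZMod (N + 1)) ∈ S.image Nat.cast ↔ a ∈ S := by
  refine ⟨fun h => ?_, fun h => mem_image_of_mem _ h⟩
  obtain ⟨s, hs, hsa⟩ := mem_image.1 h
  have hsN := mem_Icc.1 (hS hs)
  rw [ZMod.natCast_eq_natCast_iff', Nat.mod_eq_of_lt (by omega : s < N + 1)] at hsa
  obtain rfl : s = a := by
    rcases ha.lt_or_eq with ha | rfl
    · rwa [Nat.mod_eq_of_lt ha] at hsa
    · rw [Nat.mod_self] at hsa; omega
  exact hs

lemma zero_notMem_image_natCast (hS : S ⊆ Icc 1 N) : (0 : ZMod (N + 1)) ∉ S.image Nat.cast := by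
  rw [← ZMod.natCast_self, natCast_mem_image_natCast_iff hS le_rfl]
  exact fun h => by simpa using hS h

lemma image_natCast_Ico (j y : ℕ) :
    (range y).image (fun t : ℕ => (j : ZMod (N + 1)) + t) = (Ico j (j + y)).image Nat.cast := by
  ext x
  simp only [mem_image, mem_range, mem_Ico]
  constructor
  · rintro ⟨t, ht, rfl⟩
    exact ⟨j + t, by omega, by push_cast; ring⟩
  · rintro ⟨a, ha, rfl⟩
    exact ⟨a - j, by omega, by rw [← Nat.cast_add, Nat.add_sub_cancel' ha.1]⟩

variable {c j y : ℕ}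

lemma parkStep_eq_of_first_gap (hcj : c ≤ j) (hj : j ∉ S) (hgap : ∀ i, c ≤ i → i < j → i ∈ S)
    (hy : 0 < y) :
    parkStep N S c y = if j + y ≤ N + 1 ∧ ∀ k ∈ Ico j (j + y), k ∉ S
      then some (S ∪ Ico j (j + y)) else none := by
  unfold parkStep
  by_cases hjN : j ≤ N
  · have hfind : (List.range' c (N + 1 - c)).find? (fun i => decide (i ∉ S)) = some j := by
      simp only [List.find?_range'_eq_some, List.mem_range'_1]
      exact ⟨by simpa using hj, by omega, fun i hci hij => by simpa using hgap i hci hij⟩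
    simp only [hfind, show j + y - 1 ≤ N ↔ j + y ≤ N + 1 by omega]
  · have hfind : (List.range' c (N + 1 - c)).find? (fun i => decide (i ∉ S)) = none := by
      simp only [List.find?_range'_eq_none]
      exact fun i hci hi => by simpa using hgap i hci (by omega)
    simp only [hfind]
    rw [if_neg (by omega)]

lemma cparkStep_eq_of_first_gap (hS : S ⊆ Icc 1 N) (hc : 1 ≤ c) (hcj : c ≤ j) (hjN : j ≤ N + 1)
    (hj : j ∉ S) (hgap : ∀ i, c ≤ i → i < j → i ∈ S) :
    cparkStep (N + 1) (S.image Nat.cast) c y =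
      if ∀ s ∈ (Ico j (j + y)).image Nat.cast, s ∉ S.image (Nat.cast : ℕ → ZMod (N + 1))
      then some (S.image Nat.cast ∪ (Ico j (j + y)).image Nat.cast) else none := by
  have hfind : (List.range (N + 1)).find?
      ((fun k : ZMod (N + 1) => decide ((c : ZMod (N + 1)) + k ∉ S.image Nat.cast)) ∘ Nat.cast)
        = some (j - c) := by
    simp only [List.find?_range_eq_some, List.mem_range, Function.comp_apply, ← Nat.cast_add,
      Nat.add_sub_cancel' hcj, natCast_mem_image_natCast_iff hS hjN]
    refine ⟨by simpa using hj, by omega, fun i hi => ?_⟩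
    simp only [Bool.not_eq_true', decide_eq_false_iff_not, not_not,
      natCast_mem_image_natCast_iff hS (by omega : c + i ≤ N + 1)]
    exact hgap (c + i) (by omega) (by omega)
  unfold cparkStep
  simp only [List.pure_def, List.bind_eq_flatMap, ← List.map_eq_flatMap, List.find?_map, hfind,
    Option.map_some]
  rw [← Nat.cast_add, Nat.add_sub_cancel' hcj, image_natCast_Ico]
  -- the two sides still differ in the `Decidable` instance of the condition
  congr 1

lemma parkStep_subset_Icc (hS : S ⊆ Icc 1 N) (hc : 1 ≤ c) {S' : Finset ℕ}
    (h : parkStep N S c y = some S') : S' ⊆ Icc 1 N := by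
  unfold parkStep at h
  split at h
  · simp at h
  · rename_i j hfind
    split_ifs at h with hfit
    obtain rfl := Option.some.inj h
    have hcj : c ≤ j := (List.mem_range'_1.1 (List.mem_of_find?_eq_some hfind)).1
    intro k hk
    simp only [mem_union, mem_Ico] at hk
    rcases hk with hk | hk
    · exact hS hk
    · exact mem_Icc.2 ⟨by omega, by omega⟩

lemma parkStep_map_image_natCast (hS : S ⊆ Icc 1 N) (hc : 1 ≤ c) (hcN : c ≤ N) (hy : 0 < y) :
    (parkStep N S c y).map (image Nat.cast) =
      (cparkStep (N + 1) (S.image Nat.cast) c y).filter (fun T => decide (0 ∉ T)) := by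
  obtain ⟨j, hcj, hj, hgap⟩ := S.exists_first_notMem_ge c
  have hjN : j ≤ N + 1 := by
    by_contra! h
    have := mem_Icc.1 (hS (hgap (N + 1) (by omega) h))
    omega
  rw [parkStep_eq_of_first_gap hcj hj hgap hy, cparkStep_eq_of_first_gap hS hc hcj hjN hj hgap]
  by_cases hfit : j + y ≤ N + 1
  · have hIco : Ico j (j + y) ⊆ Icc 1 N := fun k hk => by
      simp only [mem_Ico, mem_Icc] at hk ⊢; omega
    have hfree : (∀ s ∈ (Ico j (j + y)).image Nat.cast, s ∉ S.image (Nat.cast : ℕ → ZMod (N + 1)))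
        ↔ ∀ k ∈ Ico j (j + y), k ∉ S := by
      simp only [forall_mem_image]
      exact forall₂_congr fun k hk => not_congr
        (natCast_mem_image_natCast_iff hS (Nat.le_succ_of_le (mem_Icc.1 (hIco hk)).2))
    simp only [hfit, true_and, hfree]
    split_ifs
    · rw [Option.map_some, Option.filter_some, ← image_union,
        if_pos (by simpa using zero_notMem_image_natCast (union_subset hS hIco))]
    · rfl
  · rw [if_neg (by tauto), Option.map_none, eq_comm, Option.filter_eq_none_iff]
    have hzero : (0 : ZMod (N + 1)) ∈ (Ico j (j + y)).image Nat.cast := by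
      rw [← ZMod.natCast_self]
      exact mem_image_of_mem _ (mem_Ico.2 ⟨hjN, by omega⟩)
    intro T hT
    split_ifs at hT
    simp [← Option.some.inj hT, hzero]

end

lemma subset_of_cparkStep_eq_some {M : ℕ} {occ occ' : Finset (ZMod M)} {c : ZMod M} {y : ℕ}
    (h : cparkStep M occ c y = some occ') : occ ⊆ occ' := by
  unfold cparkStep at h
  split at h
  · simp at h
  · dsimp only at h
    split_ifs at h
    exact (Option.some.inj h) ▸ subset_union_left

lemma subset_of_foldlM_cparkStep_eq_some {M : ℕ} (l : List (ZMod M × ℕ))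
    {occ occ' : Finset (ZMod M)} (h : l.foldlM (fun o p => cparkStep M o p.1 p.2) occ = some occ') :
    occ ⊆ occ' := by
  induction l generalizing occ with
  | nil => exact (Option.some.inj h).le
  | cons p l ih =>
    rw [List.foldlM_cons] at h
    obtain ⟨occ₁, h₁, h⟩ := Option.bind_eq_some_iff.1 h
    exact (subset_of_cparkStep_eq_some h₁).trans (ih h)

lemma foldlM_parkStep_map_image_natCast {N : ℕ} (l : List (ℕ × ℕ))
    (hl : ∀ p ∈ l, 1 ≤ p.1 ∧ p.1 ≤ N ∧ 0 < p.2) {S : Finset ℕ} (hS : S ⊆ Icc 1 N) :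
    (l.foldlM (fun occ p => parkStep N occ p.1 p.2) S).map (image Nat.cast) =
      ((l.map (Prod.map Nat.cast id)).foldlM (fun occ p => cparkStep (N + 1) occ p.1 p.2)
        (S.image Nat.cast)).filter (fun T => decide (0 ∉ T)) := by
  induction l generalizing S with
  | nil =>
    simp only [List.map_nil, List.foldlM_nil, Option.pure_def, Option.map_some, Option.filter_some]
    rw [if_pos (by simpa using zero_notMem_image_natCast hS)]
  | cons p l ih =>
    obtain ⟨hp, hpN, hy⟩ := hl p List.mem_cons_self
    have hl' := fun q hq => hl q (List.mem_cons_of_mem p hq)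
    have hstep := parkStep_map_image_natCast hS hp hpN hy
    simp only [List.map_cons, List.foldlM_cons, Prod.map_fst, Prod.map_snd, id, Option.bind_eq_bind]
    cases hlin : parkStep N S p.1 p.2 with
    | some S' =>
      rw [hlin, Option.map_some, eq_comm, Option.filter_eq_some_iff] at hstep
      rw [hstep.1, Option.bind_some, Option.bind_some]
      exact ih hl' (parkStep_subset_Icc hS hp hlin)
    | none =>
      rw [hlin, Option.map_none, eq_comm, Option.filter_eq_none_iff] at hstep
      rw [Option.bind_none, Option.map_none, eq_comm, Option.filter_eq_none_iff]
      intro T hT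
      obtain ⟨T₁, hT₁, hT⟩ := Option.bind_eq_some_iff.1 hT
      have h0 : (0 : ZMod (N + 1)) ∈ T₁ := by simpa using hstep T₁ hT₁
      simpa using subset_of_foldlM_cparkStep_eq_some _ hT h0

/-- A sequence with entries in `{1, …, M-1}` is a linear parking sequence iff it is a
circular parking sequence on `M = y.sum + 1` spots in which spot `M` (i.e. `0` in
`ZMod M`) remains empty. -/
theorem linear_iff_circular_with_empty (y c : List ℕ) (hy : ∀ x ∈ y, 0 < x)
    (hlen : c.length = y.length) (hc : ∀ x ∈ c, 1 ≤ x ∧ x ≤ y.sum) :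
    IsParkingSeq y c ↔
      ∃ occ : Finset (ZMod (y.sum + 1)),
        cparkRun (y.sum + 1) ((c.map (Nat.cast : ℕ → ZMod (y.sum + 1))).zip y) = some occ ∧
        (0 : ZMod (y.sum + 1)) ∉ occ := by
  have hl : ∀ p ∈ c.zip y, 1 ≤ p.1 ∧ p.1 ≤ y.sum ∧ 0 < p.2 := fun p hp =>
    have hp := List.of_mem_zip hp
    ⟨(hc p.1 hp.1).1, (hc p.1 hp.1).2, hy p.2 hp.2⟩
  have hrun := congrArg Option.isSome (foldlM_parkStep_map_image_natCast (c.zip y) hl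
    (empty_subset (Icc 1 y.sum)))
  rw [Option.isSome_map, Option.isSome_filter, image_empty] at hrun
  simp only [IsParkingSeq, parkRun, cparkRun, List.zip_map_left, hrun, hlen, true_and,
    Option.any_eq_true, decide_eq_true_eq]
  exact ⟨fun h => h.2, fun h => ⟨fun x hx => (hc x hx).1, h⟩⟩
end
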